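/- If G is a proper subdivision of K_5 minus an edge (at least one edge is subdivided), then pn(G) = 2. -/

import Mathlib

/-- A path decomposition of `G`: a list of paths of `G` whose edge sets are pairwise
disjoint and whose union is the edge set of `G`. -/
def IsPathDecomp {V : Type} (G : SimpleGraph V)
    (P : List (Σ u : V, Σ v : V, G.Walk u v)) : Prop :=
  (∀ p ∈ P, p.2.2.IsPath) ∧
  (∀ e : Sym2 V, e ∈ G.edgeSet ↔ ∃ p ∈ P, e ∈ p.2.2.edges) ∧
  P.Pairwise (fun p q => ∀ e, e ∈ p.2.2.edges → e ∉ q.2.2.edges)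

/-- `K₅` minus one edge. -/
def K5m : SimpleGraph (Fin 5) := (SimpleGraph.completeGraph (Fin 5)).deleteEdges {s(0, 1)}

/-- `G` is a subdivision of `H`: branch vertices are given by the embedding `f`, and every
edge of `H` is realized by a path of `G`; these paths are internally disjoint, they cover
all edges and all vertices of `G`. -/
def IsSubdivisionOf {V W : Type} (G : SimpleGraph V) (H : SimpleGraph W)
    (f : W ↪ V) (P : ∀ a b : W, H.Adj a b → G.Walk (f a) (f b)) : Prop :=
  (∀ a b (h : H.Adj a b), (P a b h).IsPath) ∧
  (∀ a b (h : H.Adj a b), P b a h.symm = (P a b h).reverse) ∧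
  (∀ e : Sym2 V, e ∈ G.edgeSet ↔ ∃ (a b : W) (h : H.Adj a b), e ∈ (P a b h).edges) ∧
  (∀ a b (h : H.Adj a b) (w : W), (f w : V) ∈ (P a b h).support → w = a ∨ w = b) ∧
  (∀ a b c d (h₁ : H.Adj a b) (h₂ : H.Adj c d), s(a, b) ≠ s(c, d) →
    ∀ x : V, x ∈ (P a b h₁).support → x ∈ (P c d h₂).support →
      (x = f a ∨ x = f b) ∧ (x = f c ∨ x = f d)) ∧
  (∀ x : V, ∃ (a b : W) (h : H.Adj a b), x ∈ (P a b h).support)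

/-!
A path has at most two edges at each vertex, whereas the branch vertex `2` of `K₅⁻` has three
distinct neighbours `0, 1, 3`, whose branch paths leave `f 2` along three distinct edges; hence
no single path covers `G`. Conversely, let `x` be the vertex following `f a` on the subdivided
branch path from `f a` to `f b`. For every edge `ab` of `K₅⁻`, the remaining eight edges form two
edge-disjoint paths `p` from `a` and `q` from `b`. Replace every edge of `p` and `q` by its
branch path: the edge `x — f a` followed by the expansion of `p`, and the rest of the branch path
from `x` to `f b` followed by the expansion of `q`, are two paths of `G` that partition its
edges, because `x` is an interior vertex and so lies on no other branch path.
-/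

open SimpleGraph

namespace SimpleGraph

variable {V W : Type} {G : SimpleGraph V} {H : SimpleGraph W}

namespace Walk

theorem IsPath.append {u v w : V} {p : G.Walk u v} {q : G.Walk v w}
    (hp : p.IsPath) (hq : q.IsPath) (h : ∀ x ∈ p.support, x ∈ q.support → x = v) :
    (p.append q).IsPath := by
  rw [isPath_def, support_append, List.nodup_append]
  have hq' := hq.support_nodup
  rw [← q.cons_tail_support, List.nodup_cons] at hq'
  refine ⟨hp.support_nodup, hq'.2, fun x hxp y hyq hxy => hq'.1 ?_⟩
  subst hxy
  exact h x hxp (List.mem_of_mem_tail hyq) ▸ hyq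

theorem IsPath.exists_eq_or_eq_of_mem_edges {u v : V} {p : G.Walk u v} (hp : p.IsPath)
    (t : V) : ∃ a b, ∀ y, s(t, y) ∈ p.edges → y = a ∨ y = b := by
  induction p with
  | nil => exact ⟨t, t, by simp⟩
  | @cons u w v huw q ih =>
    rw [cons_isPath_iff] at hp
    by_cases htu : t = u
    · subst htu
      refine ⟨w, w, fun y hy => ?_⟩
      rw [edges_cons, List.mem_cons] at hy
      rcases hy with hy | hy
      · grind [Sym2.eq_iff]
      · exact absurd (q.fst_mem_support_of_mem_edges hy) hp.2
    by_cases htw : t = w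
    · subst htw
      refine ⟨u, q.snd, fun y hy => ?_⟩
      rw [edges_cons, List.mem_cons] at hy
      rcases hy with hy | hy
      · grind [Sym2.eq_iff]
      · exact Or.inr (hp.1.snd_of_toSubgraph_adj (adj_toSubgraph_iff_mem_edges.mpr hy)).symm
    obtain ⟨a, b, hab⟩ := ih hp.1
    refine ⟨a, b, fun y hy => hab y ?_⟩
    rw [edges_cons, List.mem_cons] at hy
    exact hy.resolve_left (by grind [Sym2.eq_iff])

def expand {f : W → V} (P : ∀ a b : W, H.Adj a b → G.Walk (f a) (f b)) :
    ∀ {a b : W}, H.Walk a b → G.Walk (f a) (f b)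
  | _, _, .nil => .nil
  | _, _, .cons h p => (P _ _ h).append (p.expand P)

theorem eq_or_exists_of_mem_support_expand {f : W → V}
    {P : ∀ a b : W, H.Adj a b → G.Walk (f a) (f b)} {a b : W} {p : H.Walk a b} {x : V}
    (hx : x ∈ (p.expand P).support) :
    x = f a ∨ ∃ (c d : W) (h : H.Adj c d), s(c, d) ∈ p.edges ∧ x ∈ (P c d h).support := by
  induction p with
  | nil => simpa [expand] using hx
  | @cons u w v h q ih =>
    rw [expand, mem_support_append_iff] at hx
    rcases hx with hx | hx
    · exact Or.inr ⟨u, w, h, by simp, hx⟩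
    · rcases ih hx with rfl | ⟨c, d, hcd, hq, hxcd⟩
      · exact Or.inr ⟨u, w, h, by simp, (P u w h).end_mem_support⟩
      · exact Or.inr ⟨c, d, hcd, by simp [hq], hxcd⟩

end Walk

def SplitsIntoPathsFrom (H : SimpleGraph W) (a b : W) : Prop :=
  ∃ (a' b' : W) (p : H.Walk a a') (q : H.Walk b b'), p.IsPath ∧ q.IsPath ∧
    (s(a, b) :: (p.edges ++ q.edges)).Nodup ∧
    ∀ c d, H.Adj c d → s(c, d) ∈ s(a, b) :: (p.edges ++ q.edges)

theorem SplitsIntoPathsFrom.symm {a b : W} (h : H.SplitsIntoPathsFrom a b) :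
    H.SplitsIntoPathsFrom b a := by
  obtain ⟨a', b', p, q, hp, hq, hnodup, hcover⟩ := h
  refine ⟨b', a', q, p, hq, hp, ?_, fun c d hcd => ?_⟩
  · rw [Sym2.eq_swap, List.nodup_cons, List.mem_append, or_comm, List.nodup_append_comm,
      ← List.mem_append, ← List.nodup_cons]
    exact hnodup
  · have := hcover c d hcd
    simp only [List.mem_cons, List.mem_append] at this ⊢
    rw [@Sym2.eq_swap _ b a]
    tauto

theorem SplitsIntoPathsFrom.of_isChain {a b : W} (l₁ l₂ : List W)
    (h₁ : (a :: l₁).IsChain H.Adj) (h₂ : (b :: l₂).IsChain H.Adj)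
    (h : (a :: l₁).Nodup ∧ (b :: l₂).Nodup ∧
      let edges := (Walk.ofSupport _ (List.cons_ne_nil a l₁) h₁).edges ++
        (Walk.ofSupport _ (List.cons_ne_nil b l₂) h₂).edges
      (s(a, b) :: edges).Nodup ∧ ∀ c d, H.Adj c d → s(c, d) ∈ s(a, b) :: edges) :
    H.SplitsIntoPathsFrom a b :=
  ⟨_, _, _, _, .mk' ((Walk.support_ofSupport _ h₁).symm ▸ h.1),
    .mk' ((Walk.support_ofSupport _ h₂).symm ▸ h.2.1), h.2.2⟩

end SimpleGraph

theorem IsPathDecomp.two_le_length {V : Type} {G : SimpleGraph V} {D} (hD : IsPathDecomp G D)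
    {t y₀ y₁ y₂ : V} (h₀ : G.Adj t y₀) (h₁ : G.Adj t y₁) (h₂ : G.Adj t y₂)
    (h₀₁ : y₀ ≠ y₁) (h₀₂ : y₀ ≠ y₂) (h₁₂ : y₁ ≠ y₂) : 2 ≤ D.length := by
  obtain ⟨hpath, hcover, -⟩ := hD
  match D, hpath, hcover with
  | [], _, hcover => simpa using (hcover s(t, y₀)).mp h₀
  | [p], hpath, hcover =>
    have hp : ∀ y, G.Adj t y → s(t, y) ∈ p.2.2.edges := fun y hy => by
      simpa using (hcover s(t, y)).mp hy
    obtain ⟨a, b, hab⟩ := (hpath p (by simp)).exists_eq_or_eq_of_mem_edges t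
    have := hab _ (hp _ h₀); have := hab _ (hp _ h₁); have := hab _ (hp _ h₂)
    grind
  | _ :: _ :: _, _, _ => simp

namespace IsSubdivisionOf

variable {V W : Type} {G : SimpleGraph V} {H : SimpleGraph W} {f : W ↪ V}
  {P : ∀ a b : W, H.Adj a b → G.Walk (f a) (f b)}

theorem isPath (hsub : IsSubdivisionOf G H f P) {a b : W} (h : H.Adj a b) : (P a b h).IsPath :=
  hsub.1 a b h

theorem mem_edges_of_sym2_eq (hsub : IsSubdivisionOf G H f P) {a b c d : W} {h : H.Adj a b}
    {h' : H.Adj c d} (hs : s(a, b) = s(c, d)) {e : Sym2 V} (he : e ∈ (P a b h).edges) :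
    e ∈ (P c d h').edges := by
  rcases Sym2.eq_iff.mp hs with ⟨rfl, rfl⟩ | ⟨rfl, rfl⟩
  · exact he
  · rwa [hsub.2.1 a b h, Walk.edges_reverse, List.mem_reverse]

theorem mem_edgeSet_iff (hsub : IsSubdivisionOf G H f P) {e : Sym2 V} :
    e ∈ G.edgeSet ↔ ∃ (a b : W) (h : H.Adj a b), e ∈ (P a b h).edges :=
  hsub.2.2.1 e

theorem eq_or_eq_of_mem_support_of_mem_support (hsub : IsSubdivisionOf G H f P) {a b c d : W}
    {h : H.Adj a b} {h' : H.Adj c d} (hs : s(a, b) ≠ s(c, d)) {x : V}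
    (hx : x ∈ (P a b h).support) (hx' : x ∈ (P c d h').support) :
    (x = f a ∨ x = f b) ∧ (x = f c ∨ x = f d) :=
  hsub.2.2.2.2.1 a b c d h h' hs x hx hx'

theorem sym2_eq_of_mem_edges (hsub : IsSubdivisionOf G H f P) {a b c d : W}
    {h : H.Adj a b} {h' : H.Adj c d} {e : Sym2 V} (he : e ∈ (P a b h).edges)
    (he' : e ∈ (P c d h').edges) : s(a, b) = s(c, d) := by
  by_contra hs
  induction e with
  | _ x y =>
    have hxy : x ≠ y := (Walk.edges_subset_edgeSet _ he : G.Adj x y).ne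
    have hx := hsub.eq_or_eq_of_mem_support_of_mem_support hs
      ((P a b h).fst_mem_support_of_mem_edges he) ((P c d h').fst_mem_support_of_mem_edges he')
    have hy := hsub.eq_or_eq_of_mem_support_of_mem_support hs
      ((P a b h).snd_mem_support_of_mem_edges he) ((P c d h').snd_mem_support_of_mem_edges he')
    have hab : s(f a, f b) = s(x, y) :=
      (Sym2.mem_and_mem_iff hxy).mp ⟨by simpa using hx.1, by simpa using hy.1⟩
    have hcd : s(f c, f d) = s(x, y) :=
      (Sym2.mem_and_mem_iff hxy).mp ⟨by simpa using hx.2, by simpa using hy.2⟩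
    exact hs (Sym2.map.injective f.injective (by simpa using hab.trans hcd.symm))

theorem snd_ne_snd (hsub : IsSubdivisionOf G H f P) {a b b' : W} (h : H.Adj a b)
    (h' : H.Adj a b') (hb : b ≠ b') : (P a b h).snd ≠ (P a b' h').snd := by
  intro heq
  have hs : s(a, b) ≠ s(a, b') := by grind [Sym2.eq_iff, Adj.ne]
  have hx := hsub.eq_or_eq_of_mem_support_of_mem_support hs ((P a b h).getVert_mem_support 1)
    (heq ▸ (P a b' h').getVert_mem_support 1 : (P a b h).snd ∈ (P a b' h').support)
  have hne : (P a b h).snd ≠ f a :=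
    (Walk.adj_snd (Walk.not_nil_of_ne (f.injective.ne h.ne))).ne'
  grind [f.injective.eq_iff]

theorem two_le_length_of_isPathDecomp (hsub : IsSubdivisionOf G H f P) {c a₀ a₁ a₂ : W}
    (h₀ : H.Adj c a₀) (h₁ : H.Adj c a₁) (h₂ : H.Adj c a₂)
    (h₀₁ : a₀ ≠ a₁) (h₀₂ : a₀ ≠ a₂) (h₁₂ : a₁ ≠ a₂) {D} (hD : IsPathDecomp G D) :
    2 ≤ D.length :=
  have hadj : ∀ {a} (h : H.Adj c a), G.Adj (f c) (P c a h).snd := fun h =>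
    Walk.adj_snd (Walk.not_nil_of_ne (f.injective.ne h.ne))
  hD.two_le_length (hadj h₀) (hadj h₁) (hadj h₂) (hsub.snd_ne_snd h₀ h₁ h₀₁)
    (hsub.snd_ne_snd h₀ h₂ h₀₂) (hsub.snd_ne_snd h₁ h₂ h₁₂)

theorem mem_edges_expand (hsub : IsSubdivisionOf G H f P) {a b : W} (p : H.Walk a b)
    {e : Sym2 V} : e ∈ (p.expand P).edges ↔
      ∃ (c d : W) (h : H.Adj c d), s(c, d) ∈ p.edges ∧ e ∈ (P c d h).edges := by
  induction p with
  | nil => simp [Walk.expand]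
  | @cons u w v h q ih =>
    simp only [Walk.expand, Walk.edges_append, List.mem_append, ih, Walk.edges_cons,
      List.mem_cons]
    constructor
    · rintro (he | ⟨c, d, hcd, hq, he⟩)
      exacts [⟨u, w, h, Or.inl rfl, he⟩, ⟨c, d, hcd, Or.inr hq, he⟩]
    · rintro ⟨c, d, hcd, hs | hq, he⟩
      exacts [Or.inl (hsub.mem_edges_of_sym2_eq hs he), Or.inr ⟨c, d, hcd, hq, he⟩]

theorem notMem_edges_expand (hsub : IsSubdivisionOf G H f P) {a b c c' : W} {h : H.Adj a b}
    {q : H.Walk c c'} (hq : s(a, b) ∉ q.edges) {e : Sym2 V} (he : e ∈ (P a b h).edges) :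
    e ∉ (q.expand P).edges := by
  rw [hsub.mem_edges_expand]
  rintro ⟨c, d, hcd, hs, he'⟩
  exact hq (hsub.sym2_eq_of_mem_edges he he' ▸ hs)

theorem disjoint_edges_expand (hsub : IsSubdivisionOf G H f P) {a a' b b' : W}
    {p : H.Walk a a'} {q : H.Walk b b'} (hpq : p.edges.Disjoint q.edges) :
    (p.expand P).edges.Disjoint (q.expand P).edges := by
  intro e hep
  obtain ⟨c, d, hcd, hs, he⟩ := (hsub.mem_edges_expand p).mp hep
  exact hsub.notMem_edges_expand (fun hs' => hpq hs hs') he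

theorem isPath_expand (hsub : IsSubdivisionOf G H f P) {a b : W} {p : H.Walk a b}
    (hp : p.IsPath) : (p.expand P).IsPath := by
  induction p with
  | nil => exact Walk.IsPath.nil
  | @cons u w v h q ih =>
    rw [Walk.cons_isPath_iff] at hp
    refine (hsub.isPath h).append (ih hp.1) fun x hxuw hxq => ?_
    rcases Walk.eq_or_exists_of_mem_support_expand hxq with hx | ⟨c, d, hcd, hq, hxcd⟩
    · exact hx
    have hu : u ≠ c ∧ u ≠ d := ⟨fun huc => hp.2 (huc ▸ q.fst_mem_support_of_mem_edges hq),
      fun hud => hp.2 (hud ▸ q.snd_mem_support_of_mem_edges hq)⟩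
    have hs : s(u, w) ≠ s(c, d) := fun hs => by grind [Sym2.eq_iff]
    obtain ⟨rfl | hx, hx'⟩ := hsub.eq_or_eq_of_mem_support_of_mem_support hs hxuw hxcd
    · grind [f.injective.eq_iff]
    · exact hx

theorem eq_or_eq_of_mem_support_of_mem_support_expand (hsub : IsSubdivisionOf G H f P)
    {a b c c' : W} {h : H.Adj a b} {q : H.Walk c c'} (hq : s(a, b) ∉ q.edges) {y : V}
    (hy : y ∈ (P a b h).support) (hy' : y ∈ (q.expand P).support) :
    y = f a ∨ y = f b ∨ y = f c := by
  rcases Walk.eq_or_exists_of_mem_support_expand hy' with hyc | ⟨c, d, hcd, hs, hycd⟩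
  · exact Or.inr (Or.inr hyc)
  · have hne : s(a, b) ≠ s(c, d) := fun heq => hq (heq ▸ hs)
    have := (hsub.eq_or_eq_of_mem_support_of_mem_support hne hy hycd).1
    tauto

theorem isPath_cons_expand (hsub : IsSubdivisionOf G H f P) {a a' b : W} {h : H.Adj a b}
    {x : V} (hx : G.Adj x (f a)) (hxP : x ∈ (P a b h).support) (hxb : x ≠ f b)
    {p : H.Walk a a'} (hp : p.IsPath) (hab : s(a, b) ∉ p.edges) :
    (Walk.cons hx (p.expand P)).IsPath := by
  refine (Walk.cons_isPath_iff _ _).mpr ⟨hsub.isPath_expand hp, fun hxp => ?_⟩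
  have := hsub.eq_or_eq_of_mem_support_of_mem_support_expand hab hxP hxp
  have := hx.ne
  tauto

theorem isPath_append_expand (hsub : IsSubdivisionOf G H f P) {a b b' : W} {h : H.Adj a b}
    {x : V} {w : G.Walk x (f b)} (hw : w.IsPath) (hw_sub : w.support ⊆ (P a b h).support)
    (ha : f a ∉ w.support) {q : H.Walk b b'} (hq : q.IsPath) (hab : s(a, b) ∉ q.edges) :
    (w.append (q.expand P)).IsPath := by
  refine hw.append (hsub.isPath_expand hq) fun y hyw hyq => ?_
  rcases hsub.eq_or_eq_of_mem_support_of_mem_support_expand hab (hw_sub hyw) hyq with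
    rfl | hy | hy
  exacts [absurd hyw ha, hy, hy]

theorem mem_edges_or_mem_edges_expand (hsub : IsSubdivisionOf G H f P) {a a' b b' : W}
    (h : H.Adj a b) {p : H.Walk a a'} {q : H.Walk b b'}
    (hcover : ∀ c d, H.Adj c d → s(c, d) ∈ s(a, b) :: (p.edges ++ q.edges)) {e : Sym2 V}
    (he : e ∈ G.edgeSet) :
    e ∈ (P a b h).edges ∨ e ∈ (p.expand P).edges ∨ e ∈ (q.expand P).edges := by
  obtain ⟨c, d, hcd, he⟩ := hsub.mem_edgeSet_iff.mp he
  rcases List.mem_cons.mp (hcover c d hcd) with hs | hs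
  · exact Or.inl (hsub.mem_edges_of_sym2_eq hs he)
  rcases List.mem_append.mp hs with hs | hs
  · exact Or.inr (Or.inl ((hsub.mem_edges_expand p).mpr ⟨c, d, hcd, hs, he⟩))
  · exact Or.inr (Or.inr ((hsub.mem_edges_expand q).mpr ⟨c, d, hcd, hs, he⟩))

theorem exists_isPathDecomp_length_eq_two (hsub : IsSubdivisionOf G H f P) {a b : W}
    (h : H.Adj a b) (hlen : 2 ≤ (P a b h).length) (hsplit : H.SplitsIntoPathsFrom a b) :
    ∃ D, IsPathDecomp G D ∧ D.length = 2 := by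
  obtain ⟨a', b', p, q, hp, hq, hnodup, hcover⟩ := hsplit
  rw [List.nodup_cons, List.mem_append, not_or, List.nodup_append'] at hnodup
  obtain ⟨⟨hab_p, hab_q⟩, -, -, hpq⟩ := hnodup
  obtain ⟨x, hx, w, hw⟩ := Walk.exists_eq_cons_of_ne (f.injective.ne h.ne) (P a b h)
  have hxw := hsub.isPath h
  rw [hw, Walk.cons_isPath_iff] at hxw
  have hxb : x ≠ f b := by
    rintro rfl
    rw [hw, Walk.length_cons, (Walk.isPath_iff_nil.mp hxw.1).length_eq_zero] at hlen
    omega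
  have hw_sub : w.support ⊆ (P a b h).support := by
    rw [hw, Walk.support_cons]; exact List.subset_cons_self _ _
  have hw_edges : w.edges ⊆ (P a b h).edges := by
    rw [hw, Walk.edges_cons]; exact List.subset_cons_self _ _
  have hxa_edge : s(x, f a) ∈ (P a b h).edges := by simp [hw, Sym2.eq_swap]
  let A : G.Walk x (f a') := .cons hx.symm (p.expand P)
  let B : G.Walk x (f b') := w.append (q.expand P)
  have hA : A.IsPath :=
    hsub.isPath_cons_expand hx.symm (hw_sub w.start_mem_support) hxb hp hab_p
  have hB : B.IsPath := hsub.isPath_append_expand hxw.1 hw_sub hxw.2 hq hab_q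
  refine ⟨[⟨_, _, A⟩, ⟨_, _, B⟩], ⟨by simpa using ⟨hA, hB⟩, fun e => ?_, ?_⟩, rfl⟩
  · simp only [List.mem_cons, List.not_mem_nil, or_false, exists_eq_or_imp, exists_eq_left,
      A, B, Walk.edges_cons, Walk.edges_append, List.mem_append]
    refine ⟨fun he => ?_, ?_⟩
    · have := hsub.mem_edges_or_mem_edges_expand h hcover he
      rw [hw, Walk.edges_cons, List.mem_cons, Sym2.eq_swap] at this
      tauto
    · rintro ((rfl | he) | (he | he))
      · exact hx.symm
      all_goals exact Walk.edges_subset_edgeSet _ he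
  · simp only [List.pairwise_pair, A, B, Walk.edges_cons, Walk.edges_append, List.mem_cons,
      List.mem_append]
    rintro e (rfl | he) (he' | he')
    · exact hxw.2 (w.snd_mem_support_of_mem_edges he')
    · exact hsub.notMem_edges_expand hab_q hxa_edge he'
    · exact hsub.notMem_edges_expand hab_p (hw_edges he') he
    · exact hsub.disjoint_edges_expand hpq he he'

end IsSubdivisionOf

instance : DecidableRel K5m.Adj :=
  inferInstanceAs (DecidableRel ((completeGraph (Fin 5)).deleteEdges {s(0, 1)}).Adj)

theorem K5m_splitsIntoPathsFrom {a b : Fin 5} (h : K5m.Adj a b) :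
    K5m.SplitsIntoPathsFrom a b := by
  wlog hab : a < b generalizing a b
  · exact (this h.symm (lt_of_le_of_ne (not_lt.mp hab) h.ne.symm)).symm
  fin_cases a <;> fin_cases b
  all_goals first | exact absurd hab (by decide) | exact absurd h (by decide) | skip
  · exact .of_isChain [3, 4, 2, 1] [3, 1, 4, 0] (by decide) (by decide) (by decide)
  · exact .of_isChain [2, 4, 3, 1] [2, 1, 4, 0] (by decide) (by decide) (by decide)
  · exact .of_isChain [2, 3, 4, 1] [2, 1, 3, 0] (by decide) (by decide) (by decide)
  · exact .of_isChain [3, 4, 2, 0] [3, 0, 4, 1] (by decide) (by decide) (by decide)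
  · exact .of_isChain [2, 4, 3, 0] [2, 0, 4, 1] (by decide) (by decide) (by decide)
  · exact .of_isChain [2, 3, 4, 0] [2, 0, 3, 1] (by decide) (by decide) (by decide)
  · exact .of_isChain [0, 3, 4, 1] [1, 2, 4, 0] (by decide) (by decide) (by decide)
  · exact .of_isChain [0, 4, 3, 1] [1, 2, 3, 0] (by decide) (by decide) (by decide)
  · exact .of_isChain [0, 4, 2, 1] [1, 3, 2, 0] (by decide) (by decide) (by decide)

/-- Any proper subdivision of `K₅⁻` (some edge is subdivided at least once)
has path number 2. -/
theorem pn_eq_two_proper_subdivision_K5m {V : Type} (G : SimpleGraph V)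
    (f : Fin 5 ↪ V) (P : ∀ a b : Fin 5, K5m.Adj a b → G.Walk (f a) (f b))
    (hsub : IsSubdivisionOf G K5m f P)
    (hproper : ∃ (a b : Fin 5) (h : K5m.Adj a b), 2 ≤ (P a b h).length) :
    (∃ D, IsPathDecomp G D ∧ D.length = 2) ∧
    (∀ D, IsPathDecomp G D → 2 ≤ D.length) := by
  obtain ⟨a, b, h, hlen⟩ := hproper
  refine ⟨hsub.exists_isPathDecomp_length_eq_two h hlen (K5m_splitsIntoPathsFrom h),
    fun D hD => ?_⟩
  exact hsub.two_le_length_of_isPathDecomp (c := 2) (a₀ := 0) (a₁ := 1) (a₂ := 3)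
    (by decide) (by decide) (by decide) (by decide) (by decide) (by decide) hD
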